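/- Let E be a finite abelian group and b : E × E → ℂˣ a bicharacter (a map that is a group homomorphism in each variable) which is nondegenerate, i.e. for every x ≠ 1 in E there exists y ∈ E with b(x,y) ≠ 1. If L is a subgroup of E with b(x,y) = 1 for all x, y ∈ L, then |L|² ≤ |E|. -/

import Mathlib

/-!
Nondegeneracy makes `x ↦ b x ·` an embedding of `E` into its character group. Isotropy sends `L`
into the characters trivial on `L`, i.e. the characters of `E ⧸ L`, of which there are `|E ⧸ L|`.
Hence `|L| ≤ |E ⧸ L|`, and `|L|² ≤ |L| · |E ⧸ L| = |E|`.
-/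

namespace CommGroup

open MonoidHom

variable {E M : Type*} [CommGroup E] [Finite E] [CommMonoid M]

theorem card_le_card_quotient_of_isotropic [HasEnoughRootsOfUnity M (Monoid.exponent E)]
    (B : E →* E →* Mˣ) (hB : Function.Injective B) (L : Subgroup E)
    (hL : ∀ x ∈ L, ∀ y ∈ L, B x y = 1) :
    Nat.card L ≤ Nat.card (E ⧸ L) := by
  let toAnnihilator : L → (domRestrictHom L Mˣ).ker := fun x =>
    ⟨B x, mem_ker.2 <| domRestrict_eq_one_iff.2 fun y hy => hL x x.2 y hy⟩
  have h_inj : Function.Injective toAnnihilator := fun x y hxy =>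
    Subtype.ext (hB (congrArg Subtype.val hxy))
  exact (Nat.card_le_card_of_injective toAnnihilator h_inj).trans_eq
    (card_domRestrictHom_ker M L)

theorem card_sq_le_of_isotropic [HasEnoughRootsOfUnity M (Monoid.exponent E)]
    (B : E →* E →* Mˣ) (hB : Function.Injective B) (L : Subgroup E)
    (hL : ∀ x ∈ L, ∀ y ∈ L, B x y = 1) :
    Nat.card L ^ 2 ≤ Nat.card E :=
  calc Nat.card L ^ 2 = Nat.card L * Nat.card L := sq _
    _ ≤ Nat.card (E ⧸ L) * Nat.card L :=
      Nat.mul_le_mul_right _ (card_le_card_quotient_of_isotropic B hB L hL)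
    _ = Nat.card E := L.card_eq_card_quotient_mul_card_subgroup.symm

end CommGroup

/-- For a nondegenerate bicharacter `b` on a finite abelian group `E`, any
subgroup `L` on which `b` is identically `1` satisfies `|L|² ≤ |E|`. -/
theorem isotropic_card_sq_le
    {E : Type*} [CommGroup E] [Fintype E] (b : E → E → ℂˣ)
    (hbl : ∀ x y z : E, b (x * y) z = b x z * b y z)
    (hbr : ∀ x y z : E, b x (y * z) = b x y * b x z)
    (hnd : ∀ x : E, x ≠ 1 → ∃ y : E, b x y ≠ 1)
    (L : Subgroup E) (hL : ∀ x ∈ L, ∀ y ∈ L, b x y = 1) :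
    Nat.card L ^ 2 ≤ Nat.card E := by
  let B : E →* E →* ℂˣ :=
    MonoidHom.mk' (fun x => MonoidHom.mk' (b x) (hbr x)) fun x y => MonoidHom.ext (hbl x y)
  have hB : Function.Injective B := (injective_iff_map_eq_one B).2 fun x hx => by
    by_contra hx1
    obtain ⟨y, hy⟩ := hnd x hx1
    exact hy (DFunLike.congr_fun hx y)
  exact CommGroup.card_sq_le_of_isotropic B hB L hL
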